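/- For every n-qubit state ρ and every real α ≥ 1/2 with α ≠ 1, the magic witness is bounded by twice the logarithm of the stabilizer norm: W_α(ρ) ≤ 2 ln D(ρ). -/

import Mathlib

open Matrix Complex BigOperators
open scoped ComplexOrder

noncomputable section

/-- Index type for `n` qubits: functions `Fin n → Fin 2` (cardinality `2^n`). -/
abbrev QIdx (n : ℕ) := Fin n → Fin 2

/-- The four single-qubit Pauli matrices: `σ⁰ = I`, `σ¹ = σˣ`, `σ² = σᶻ`, `σ³ = σʸ`. -/
def pauliMat : Fin 4 → Matrix (Fin 2) (Fin 2) ℂ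
  | 0 => 1
  | 1 => !![0, 1; 1, 0]
  | 2 => !![1, 0; 0, -1]
  | 3 => !![0, -Complex.I; Complex.I, 0]

/-- The Pauli string `σ^{a_1} ⊗ ⋯ ⊗ σ^{a_n}` as a `2^n × 2^n` matrix. -/
def pauliString {n : ℕ} (a : Fin n → Fin 4) : Matrix (QIdx n) (QIdx n) ℂ :=
  fun i j => ∏ k, pauliMat (a k) (i k) (j k)

/-- An `n`-qubit state: positive semidefinite with unit trace. -/
def IsState {n : ℕ} (ρ : Matrix (QIdx n) (QIdx n) ℂ) : Prop :=
  ρ.PosSemidef ∧ ρ.trace = 1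

/-- The `α`-moment of the Pauli spectrum `A_α(ρ) = 2^{-n} ∑_P |tr(ρP)|^{2α}`. -/
def Amom {n : ℕ} (α : ℝ) (ρ : Matrix (QIdx n) (QIdx n) ℂ) : ℝ :=
  ((2:ℝ)^n)⁻¹ * ∑ a : Fin n → Fin 4, (‖(ρ * pauliString a).trace‖) ^ (2 * α)

/-- The 2-Rényi entropy `S₂(ρ) = -ln tr(ρ²)`. -/
def S2 {n : ℕ} (ρ : Matrix (QIdx n) (QIdx n) ℂ) : ℝ :=
  - Real.log ((ρ * ρ).trace.re)

/-- The magic witness `W_α(ρ) = (1/(1-α)) ln A_α(ρ) - ((1-2α)/(1-α)) S₂(ρ)`. -/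
def Wit {n : ℕ} (α : ℝ) (ρ : Matrix (QIdx n) (QIdx n) ℂ) : ℝ :=
  (1 / (1 - α)) * Real.log (Amom α ρ) - ((1 - 2*α)/(1 - α)) * S2 ρ

/-- The stabilizer norm `D(ρ) = A_{1/2}(ρ) = 2^{-n} ∑_P |tr(ρP)|`. -/
def Dnorm {n : ℕ} (ρ : Matrix (QIdx n) (QIdx n) ℂ) : ℝ :=
  Amom (1/2) ρ

/-- A Clifford unitary: unitary mapping every Pauli string to `±` a Pauli string. -/
def IsCliffordUnitary {n : ℕ} (U : Matrix (QIdx n) (QIdx n) ℂ) : Prop :=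
  U ∈ Matrix.unitaryGroup (QIdx n) ℂ ∧
    ∀ a : Fin n → Fin 4, ∃ (b : Fin n → Fin 4) (ε : ℝ),
      (ε = 1 ∨ ε = -1) ∧ U * pauliString a * Uᴴ = (ε : ℂ) • pauliString b

/-- The computational all-zeros basis vector `|0⟩^{⊗n}`. -/
def zeroVec (n : ℕ) : QIdx n → ℂ :=
  fun i => if (∀ k, i k = 0) then 1 else 0

/-- A pure stabilizer state vector: `U|0⟩^{⊗n}` for a Clifford unitary `U`. -/
def IsPureStab {n : ℕ} (ψ : QIdx n → ℂ) : Prop :=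
  ∃ U, IsCliffordUnitary U ∧ ψ = U.mulVec (zeroVec n)

/-- The rank-one projector `|ψ⟩⟨ψ|`. -/
def proj {n : ℕ} (ψ : QIdx n → ℂ) : Matrix (QIdx n) (QIdx n) ℂ :=
  Matrix.vecMulVec ψ (star ψ)

/-- A mixed stabilizer state: a finite convex combination of pure stabilizer projectors. -/
def IsMixedStab {n : ℕ} (ρ : Matrix (QIdx n) (QIdx n) ℂ) : Prop :=
  ∃ (k : ℕ) (p : Fin k → ℝ) (ψ : Fin k → QIdx n → ℂ),
    (∀ i, 0 ≤ p i) ∧ (∑ i, p i = 1) ∧ (∀ i, IsPureStab (ψ i)) ∧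
    ρ = ∑ i, (p i : ℂ) • proj (ψ i)

/-- The set of values `ln ∑ᵢ |xᵢ|` over finite real stabilizer decompositions of `ρ`. -/
def StabDecomps {n : ℕ} (ρ : Matrix (QIdx n) (QIdx n) ℂ) : Set ℝ :=
  { r | ∃ (k : ℕ) (x : Fin k → ℝ) (ψ : Fin k → QIdx n → ℂ),
      (∀ i, IsPureStab (ψ i)) ∧ ρ = ∑ i, (x i : ℂ) • proj (ψ i) ∧
      r = Real.log (∑ i, |x i|) }

/-- The log-free robustness of magic. -/
def LR {n : ℕ} (ρ : Matrix (QIdx n) (QIdx n) ℂ) : ℝ := sInf (StabDecomps ρ)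

open Classical in
/-- Positive-semidefinite square root (junk value `0` off the PSD cone). -/
def psdSqrt {n : ℕ} (A : Matrix (QIdx n) (QIdx n) ℂ) : Matrix (QIdx n) (QIdx n) ℂ :=
  if h : A.PosSemidef then
    h.1.eigenvectorUnitary.1 * diagonal ((↑) ∘ Real.sqrt ∘ h.1.eigenvalues) *
      (star h.1.eigenvectorUnitary : Matrix (QIdx n) (QIdx n) ℂ)
  else 0

/-- The Uhlmann fidelity `F(ρ,σ) = (tr √(√ρ σ √ρ))²`. -/
def fidelity {n : ℕ} (ρ σ : Matrix (QIdx n) (QIdx n) ℂ) : ℝ :=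
  ((psdSqrt (psdSqrt ρ * σ * psdSqrt ρ)).trace.re) ^ 2

/-- The stabilizer fidelity `D_F(ρ) = inf { -ln F(ρ,σ) : σ a mixed stabilizer state }`. -/
def DF {n : ℕ} (ρ : Matrix (QIdx n) (QIdx n) ℂ) : ℝ :=
  sInf { r | ∃ σ, IsMixedStab σ ∧ r = - Real.log (fidelity ρ σ) }

/-- Filtered Pauli moment `Ã_α(ρ) = (2^n A_α(ρ) - 1)/(2^n - 1)`. -/
def Atil {n : ℕ} (α : ℝ) (ρ : Matrix (QIdx n) (QIdx n) ℂ) : ℝ :=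
  ((2:ℝ)^n * Amom α ρ - 1) / ((2:ℝ)^n - 1)

/-- Filtered stabilizer norm `D̃(ρ) = (2^n D(ρ) - 1)/(2^n - 1)`. -/
def Dtil {n : ℕ} (ρ : Matrix (QIdx n) (QIdx n) ℂ) : ℝ :=
  ((2:ℝ)^n * Dnorm ρ - 1) / ((2:ℝ)^n - 1)

/-- Filtered magic witness `W̃_α(ρ) = (1/(1-α)) ln Ã_α(ρ) + ((1-2α)/(1-α)) ln Ã₁(ρ)`. -/
def Wtil {n : ℕ} (α : ℝ) (ρ : Matrix (QIdx n) (QIdx n) ℂ) : ℝ :=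
  (1/(1-α)) * Real.log (Atil α ρ) + ((1 - 2*α)/(1-α)) * Real.log (Atil 1 ρ)

/-- The maximally mixed state `I/2^n`. -/
def maxMixed (n : ℕ) : Matrix (QIdx n) (QIdx n) ℂ := ((2:ℂ)^n)⁻¹ • 1

/-- The single-qubit T-state vector `|T⟩ = (|0⟩ + e^{-iπ/4}|1⟩)/√2`. -/
def Tket : QIdx 1 → ℂ :=
  fun i => if i 0 = 0 then (Real.sqrt 2 : ℂ)⁻¹
           else Complex.exp (-(Real.pi/4 : ℂ) * Complex.I) * (Real.sqrt 2 : ℂ)⁻¹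

/-- The depolarized T-state `ρ_p = (1-p)|T⟩⟨T| + p·I₂/2`. -/
def rhoDep (p : ℝ) : Matrix (QIdx 1) (QIdx 1) ℂ :=
  ((1 - p : ℝ) : ℂ) • proj Tket + ((p : ℝ) : ℂ) • (((2:ℂ))⁻¹ • 1)


/-!
The Pauli strings form an orthogonal basis, so for Hermitian `ρ` Parseval gives
`A₁(ρ) = tr ρ²`, i.e. `S₂(ρ) = -ln A₁(ρ)`. By Hölder's inequality `α ↦ ln A_α(ρ)` is convex (the
identity string contributes `|tr ρ| = 1`, so `A_α(ρ) > 0`). Hence `W_α ≤ 2 ln D` is the convexity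
inequality for `ln A_•(ρ)` at the three points `1/2`, `α` and `1`.
-/

open Finset Real

lemma Matrix.IsHermitian.star_trace_mul {ι : Type*} [Fintype ι] {A B : Matrix ι ι ℂ}
    (hA : A.IsHermitian) (hB : B.IsHermitian) : star (A * B).trace = (A * B).trace := by
  rw [← trace_conjTranspose, conjTranspose_mul, hA.eq, hB.eq, trace_mul_comm]

lemma sum_rpow_mul_add_mul_le {ι : Type*} (s : Finset ι) {c : ι → ℝ} (hc : ∀ i, 0 ≤ c i)
    {p q a b : ℝ} (hp : 0 ≤ p) (hq : 0 ≤ q) (ha : 0 < a) (hb : 0 < b) (hab : a + b = 1) :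
    ∑ i ∈ s, c i ^ (a * p + b * q) ≤ (∑ i ∈ s, c i ^ p) ^ a * (∑ i ∈ s, c i ^ q) ^ b := by
  have hconj : HolderConjugate a⁻¹ b⁻¹ := by
    rw [holderConjugate_iff, inv_inv, inv_inv]
    exact ⟨(one_lt_inv₀ ha).2 (by linarith), hab⟩
  have hpow : ∀ i (e t : ℝ), 0 < t → ((c i ^ e) ^ t) ^ t⁻¹ = c i ^ e := fun i e t ht => by
    rw [← rpow_mul (rpow_nonneg (hc i) e), mul_inv_cancel₀ ht.ne', rpow_one]
  calc ∑ i ∈ s, c i ^ (a * p + b * q) = ∑ i ∈ s, (c i ^ p) ^ a * (c i ^ q) ^ b := by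
        refine sum_congr rfl fun i _ => ?_
        rw [← rpow_mul (hc i), ← rpow_mul (hc i), mul_comm p, mul_comm q,
          rpow_add_of_nonneg (hc i) (by positivity) (by positivity)]
    _ ≤ _ := inner_le_Lp_mul_Lq_of_nonneg s hconj
        (fun i _ => rpow_nonneg (rpow_nonneg (hc i) p) a)
        (fun i _ => rpow_nonneg (rpow_nonneg (hc i) q) b)
    _ = _ := by simp only [hpow _ _ _ ha, hpow _ _ _ hb, one_div, inv_inv]

lemma sum_rpow_pos {ι : Type*} {s : Finset ι} {c : ι → ℝ} (hc : ∀ i, 0 ≤ c i)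
    (hpos : ∃ i ∈ s, 0 < c i) (t : ℝ) : 0 < ∑ i ∈ s, c i ^ t := by
  obtain ⟨i, hi, hci⟩ := hpos
  exact sum_pos' (fun j _ => rpow_nonneg (hc j) t) ⟨i, hi, rpow_pos_of_pos hci t⟩

lemma convexOn_log_sum_rpow {ι : Type*} (s : Finset ι) {c : ι → ℝ} (hc : ∀ i, 0 ≤ c i)
    (hpos : ∃ i ∈ s, 0 < c i) :
    ConvexOn ℝ (Set.Ici 0) fun t : ℝ => Real.log (∑ i ∈ s, c i ^ t) := by
  have hsum := sum_rpow_pos hc hpos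
  refine convexOn_iff_forall_pos.mpr ⟨convex_Ici 0, fun x hx y hy a b ha hb hab => ?_⟩
  rw [smul_eq_mul, smul_eq_mul, smul_eq_mul, smul_eq_mul, ← log_rpow (hsum x), ← log_rpow (hsum y),
    ← log_mul (rpow_pos_of_pos (hsum x) a).ne' (rpow_pos_of_pos (hsum y) b).ne']
  exact log_le_log (hsum _) (sum_rpow_mul_add_mul_le s hc hx hy ha hb hab)

lemma ConvexOn.add_mul_div_one_sub_le_two_mul {f : ℝ → ℝ} (hf : ConvexOn ℝ (Set.Ici (1 / 2)) f)
    {α : ℝ} (hα : 1 / 2 ≤ α) (hα1 : α ≠ 1) :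
    (f α + (1 - 2 * α) * f 1) / (1 - α) ≤ 2 * f (1 / 2) := by
  have hmem : ∀ {x : ℝ}, 1 / 2 ≤ x → x ∈ Set.Ici (1 / 2 : ℝ) := id
  rcases hα1.lt_or_gt with hlt | hgt
  · rw [div_le_iff₀ (by linarith)]
    rcases hα.eq_or_lt with rfl | hα'
    · linarith
    have hslope := hf.slope_mono_adjacent (hmem le_rfl) (hmem (by norm_num)) hα' hlt
    rw [div_le_div_iff₀ (by linarith) (by linarith)] at hslope
    nlinarith
  · rw [div_le_iff_of_neg (by linarith)]
    have hslope := hf.slope_mono_adjacent (hmem le_rfl) (hmem hα) (by norm_num) hgt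
    rw [div_le_div_iff₀ (by linarith) (by linarith)] at hslope
    nlinarith

lemma pauliMat_conj (x : Fin 4) (i j : Fin 2) :
    star (pauliMat x i j) = pauliMat x j i := by
  fin_cases x <;> fin_cases i <;> fin_cases j <;> simp [pauliMat]

lemma sum_pauliMat_mul_pauliMat (i j k l : Fin 2) :
    ∑ x : Fin 4, pauliMat x i j * pauliMat x k l = if i = l ∧ j = k then 2 else 0 := by
  rw [Fin.sum_univ_four]
  fin_cases i <;> fin_cases j <;> fin_cases k <;> fin_cases l <;> simp [pauliMat] <;> norm_num

lemma pauliString_isHermitian {n : ℕ} (a : Fin n → Fin 4) : (pauliString a).IsHermitian := by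
  ext i j
  simp only [conjTranspose_apply, pauliString, star_prod, pauliMat_conj]

lemma pauliString_zero {n : ℕ} : pauliString (0 : Fin n → Fin 4) = 1 := by
  ext i j
  simp only [pauliString, pauliMat, Matrix.one_apply, prod_ite_zero, prod_const_one, mem_univ,
    true_implies, funext_iff]

lemma sum_pauliString_mul_pauliString {n : ℕ} (i j k l : QIdx n) :
    ∑ a : Fin n → Fin 4, pauliString a i j * pauliString a k l
      = if i = l ∧ j = k then 2 ^ n else 0 := by
  simp only [pauliString, ← prod_mul_distrib]
  rw [← Fintype.prod_sum fun m x => pauliMat x (i m) (j m) * pauliMat x (k m) (l m)]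
  simp only [sum_pauliMat_mul_pauliMat, prod_ite_zero, prod_const, card_univ, Fintype.card_fin,
    mem_univ, true_implies, forall_and, funext_iff]

lemma sum_trace_mul_pauliString_mul {n : ℕ} (A B : Matrix (QIdx n) (QIdx n) ℂ) :
    ∑ a : Fin n → Fin 4, (A * pauliString a).trace * (B * pauliString a).trace
      = 2 ^ n * (A * B).trace := by
  calc _ = ∑ k, ∑ l, ∑ i, ∑ j,
        A i j * B k l * ∑ a : Fin n → Fin 4, pauliString a j i * pauliString a l k := by
        simp only [trace, diag_apply, mul_apply, sum_mul, mul_sum]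
        rw [sum_comm]
        refine sum_congr rfl fun k _ => ?_
        rw [sum_comm]
        refine sum_congr rfl fun l _ => ?_
        rw [sum_comm]
        refine sum_congr rfl fun i _ => ?_
        rw [sum_comm]
        exact sum_congr rfl fun j _ => sum_congr rfl fun a _ => by ring
    _ = 2 ^ n * (A * B).trace := by
        simp only [sum_pauliString_mul_pauliString, ite_and, mul_ite, mul_zero, sum_ite_eq',
          mem_univ, if_true, trace, diag_apply, mul_apply, mul_sum]
        rw [sum_comm]
        exact sum_congr rfl fun _ _ => sum_congr rfl fun _ _ => by ring

lemma sum_norm_trace_mul_pauliString_sq {n : ℕ} {ρ : Matrix (QIdx n) (QIdx n) ℂ}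
    (hρ : ρ.IsHermitian) :
    ∑ a : Fin n → Fin 4, ‖(ρ * pauliString a).trace‖ ^ 2 = 2 ^ n * (ρ * ρ).trace.re := by
  have hsq : ∀ a : Fin n → Fin 4, ‖(ρ * pauliString a).trace‖ ^ 2
      = ((ρ * pauliString a).trace * (ρ * pauliString a).trace).re := fun a => by
    conv_rhs => arg 1; arg 2; rw [← hρ.star_trace_mul (pauliString_isHermitian a)]
    rw [Complex.star_def, Complex.mul_conj, Complex.ofReal_re, Complex.normSq_eq_norm_sq]
  simp only [hsq, ← Complex.re_sum, sum_trace_mul_pauliString_mul]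
  rw [← Complex.ofReal_ofNat, ← Complex.ofReal_pow, Complex.re_ofReal_mul]

lemma Amom_one_eq_re_trace_mul_self {n : ℕ} {ρ : Matrix (QIdx n) (QIdx n) ℂ}
    (hρ : ρ.IsHermitian) : Amom 1 ρ = (ρ * ρ).trace.re := by
  simp only [Amom, mul_one, rpow_two, sum_norm_trace_mul_pauliString_sq hρ]
  field_simp

lemma convexOn_log_Amom {n : ℕ} {ρ : Matrix (QIdx n) (QIdx n) ℂ} (htr : ρ.trace ≠ 0) :
    ConvexOn ℝ (Set.Ici 0) fun α => Real.log (Amom α ρ) := by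
  have hpos : ∃ a ∈ univ, 0 < ‖(ρ * pauliString a).trace‖ :=
    ⟨0, mem_univ _, by rwa [pauliString_zero, mul_one, norm_pos_iff]⟩
  have hconv := ((convexOn_log_sum_rpow univ (fun _ => norm_nonneg _) hpos).comp_linearMap
    ((2 : ℝ) • LinearMap.id)).add_const (Real.log ((2 : ℝ) ^ n)⁻¹)
  refine (hconv.subset (fun α (hα : 0 ≤ α) => ?_) (convex_Ici 0)).congr fun α _ => ?_
  · simp only [Set.mem_preimage, LinearMap.smul_apply, LinearMap.id_apply, smul_eq_mul,
      Set.mem_Ici]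
    positivity
  · simp only [Pi.add_apply, Function.comp_apply, LinearMap.smul_apply, LinearMap.id_apply,
      smul_eq_mul, Amom]
    rw [Real.log_mul (by positivity) (sum_rpow_pos (fun _ => norm_nonneg _) hpos _).ne', add_comm]

/-- for `α ≥ 1/2`, `α ≠ 1`, the witness is bounded by twice the
logarithm of the stabilizer norm: `W_α(ρ) ≤ 2 ln D(ρ)`. -/
theorem witness_le_two_log_stabNorm {n : ℕ} (ρ : Matrix (QIdx n) (QIdx n) ℂ)
    (hρ : IsState ρ) (α : ℝ) (hα : (1:ℝ)/2 ≤ α) (hα1 : α ≠ 1) :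
    Wit α ρ ≤ 2 * Real.log (Dnorm ρ) := by
  obtain ⟨hpsd, htr⟩ := hρ
  have hS2 : S2 ρ = -Real.log (Amom 1 ρ) := by rw [S2, Amom_one_eq_re_trace_mul_self hpsd.1]
  have hconv : ConvexOn ℝ (Set.Ici (1 / 2)) fun α => Real.log (Amom α ρ) :=
    (convexOn_log_Amom (htr ▸ one_ne_zero)).subset (Set.Ici_subset_Ici.2 (by norm_num))
      (convex_Ici _)
  calc Wit α ρ = (Real.log (Amom α ρ) + (1 - 2 * α) * Real.log (Amom 1 ρ)) / (1 - α) := by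
        rw [Wit, hS2]; ring
    _ ≤ 2 * Real.log (Dnorm ρ) := hconv.add_mul_div_one_sub_le_two_mul hα hα1

end
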